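/- arXiv:1907.12098 — 8 statements merged into one kernel-verified Lean document; each statement's English description precedes it below -/
import Mathlib

section
/- Let f, g be surjective continuous maps on a compact metric space X and let α : X → I be a surjective map to a finite set. If g^α ⊆ f^α then d(f,g) ≤ mesh(A^α) + mesh(f A^α), where d is the sup metric. -/
open Metric

theorem diam_le_iSup_diam {X I : Type*} [PseudoMetricSpace X] [Finite I] (s : I → Set X) (i : I) :
    diam (s i) ≤ ⨆ j, diam (s j) :=
  le_ciSup (Set.finite_range fun j => diam (s j)).bddAbove i

theorem dist_le_diam_fiber_add_diam_image_fiber {X Y I J : Type*} [PseudoMetricSpace Y]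
    [BoundedSpace Y] {f g : X → Y} {α : X → I} {β : Y → J} {x y : X}
    (hy : α y = α x) (hfy : β (f y) = β (g x)) :
    dist (f x) (g x) ≤ diam (β ⁻¹' {β (g x)}) + diam (f '' (α ⁻¹' {α x})) :=
  calc dist (f x) (g x) ≤ dist (f x) (f y) + dist (f y) (g x) := dist_triangle _ _ _
    _ ≤ diam (f '' (α ⁻¹' {α x})) + diam (β ⁻¹' {β (g x)}) :=
      add_le_add
        (dist_le_diam_of_mem (Bornology.IsBounded.all _) ⟨x, rfl, rfl⟩ ⟨y, hy, rfl⟩)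
        (dist_le_diam_of_mem (Bornology.IsBounded.all _) hfy rfl)
    _ = _ := add_comm _ _

theorem dist_le_mesh_add_mesh_general {X : Type*} [MetricSpace X] [CompactSpace X]
    {I : Type*} [Finite I] (f g : X → X)
    (α : X → I)
    (hsub : ∀ x : X, ∃ y : X, α y = α x ∧ α (f y) = α (g x)) :
    ⨆ x : X, dist (f x) (g x) ≤
      (⨆ i : I, Metric.diam (α ⁻¹' {i})) +
        ⨆ i : I, Metric.diam (f '' (α ⁻¹' {i})) := by
  refine Real.iSup_le (fun x => ?_) <|
    add_nonneg (Real.iSup_nonneg fun _ => diam_nonneg) (Real.iSup_nonneg fun _ => diam_nonneg)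
  obtain ⟨y, hy, hfy⟩ := hsub x
  exact (dist_le_diam_fiber_add_diam_image_fiber hy hfy).trans <|
    add_le_add (diam_le_iSup_diam (fun i => α ⁻¹' {i}) (α (g x)))
      (diam_le_iSup_diam (fun i => f '' (α ⁻¹' {i})) (α x))

theorem dist_le_mesh_add_mesh {X : Type*} [MetricSpace X] [CompactSpace X]
    {I : Type*} [Finite I] (f g : X → X)
    (hf : Continuous f) (hg : Continuous g)
    (hfs : Function.Surjective f) (hgs : Function.Surjective g)
    (α : X → I) (hα : Function.Surjective α)
    (hsub : ∀ x : X, ∃ y : X, α y = α x ∧ α (f y) = α (g x)) :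
    ⨆ x : X, dist (f x) (g x) ≤
      (⨆ i : I, Metric.diam (α ⁻¹' {i})) +
        ⨆ i : I, Metric.diam (f '' (α ⁻¹' {i})) :=
  dist_le_mesh_add_mesh_general f g α hsub
end

section
/- If N and M are relatively prime positive integers, then the N-M wedge relation is mixing: there exists a positive integer K such that for every L ≥ K and every pair of vertices i, j of the wedge there is a path of length exactly L from i to j. -/
/-- `n`-fold relational composition. -/
def relPow {α : Type*} (R : α → α → Prop) : ℕ → α → α → Prop
  | 0 => Eq
  | n + 1 => fun a c => ∃ b, R a b ∧ relPow R n b c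

/-- The `N`-`M` wedge relation on `{1, …, N+M-1} ⊆ ℕ`: two loops of lengths `N` and `M`
sharing the vertex `N`. -/
def wedgeRel (N M : ℕ) (i j : ℕ) : Prop :=
  (1 ≤ i ∧ i ≤ N + M - 2 ∧ j = i + 1) ∨ (i = N ∧ j = 1) ∨ (i = N + M - 1 ∧ j = N)

/-!
Every vertex reaches the shared vertex (the hub) `N` in at most `N + M` steps, and the hub
reaches every vertex equally fast. Closed walks at the hub can go around either loop any number
of times, so their lengths contain every `a * N + b * M`; since `N` and `M` are coprime this
covers every number from `(N - 1) * (M - 1)` on (Sylvester's coin problem).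
Padding a walk `i → N → j` by such a closed walk produces walks of every length
`L ≥ (N - 1) * (M - 1) + 2 * (N + M)`.
-/

section relPow

variable {α : Type*} (R : α → α → Prop)

theorem relPow_add {m n : ℕ} {a b c : α} (hab : relPow R m a b) (hbc : relPow R n b c) :
    relPow R (m + n) a c := by
  induction m generalizing a with
  | zero => cases hab; simpa using hbc
  | succ m ih =>
    obtain ⟨a', haa', ha'b⟩ := hab
    rw [Nat.add_right_comm]
    exact ⟨a', haa', ih ha'b⟩

theorem relPow_succ_of_relPow {n : ℕ} {a b c : α} (hab : relPow R n a b) (hbc : R b c) :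
    relPow R (n + 1) a c :=
  relPow_add R hab ⟨c, hbc, rfl⟩

def closedWalkLengths (a : α) : AddSubmonoid ℕ where
  carrier := {n | relPow R n a a}
  zero_mem' := rfl
  add_mem' := relPow_add R

end relPow

theorem Nat.Coprime.mem_closure_pair_of_le {m n k : ℕ} (h : m.Coprime n)
    (hk : (m - 1) * (n - 1) ≤ k) : k ∈ AddSubmonoid.closure {m, n} := by
  obtain ⟨a, b, hab⟩ := Nat.exists_add_mul_eq_of_gcd_dvd_of_mul_pred_le m n k
    (by simp [h.gcd_eq_one]) hk
  exact (AddSubmonoid.mem_closure_pair m n k).mpr ⟨a, b, by simpa using hab⟩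

section wedge

variable {N M : ℕ}

theorem relPow_wedgeRel_of_le {a b : ℕ} (ha : 1 ≤ a) (hab : a ≤ b) (hb : b ≤ N + M - 1) :
    relPow (wedgeRel N M) (b - a) a b := by
  induction b, hab using Nat.le_induction with
  | base => rw [Nat.sub_self]; rfl
  | succ b hab ih =>
    rw [Nat.sub_add_comm hab]
    exact relPow_succ_of_relPow _ (ih (by omega)) (Or.inl ⟨by omega, by omega, rfl⟩)

theorem wedgeRel_hub_one : wedgeRel N M N 1 :=
  Or.inr (Or.inl ⟨rfl, rfl⟩)

theorem wedgeRel_last_hub : wedgeRel N M (N + M - 1) N :=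
  Or.inr (Or.inr ⟨rfl, rfl⟩)

theorem relPow_wedgeRel_hub_of_lt {i : ℕ} (hNi : N < i) (hi : i ≤ N + M - 1) :
    relPow (wedgeRel N M) (N + M - i) i N := by
  have hpath := relPow_succ_of_relPow _ (relPow_wedgeRel_of_le (a := i) (by omega) hi le_rfl)
    wedgeRel_last_hub
  rwa [show N + M - 1 - i + 1 = N + M - i by omega] at hpath

theorem exists_relPow_wedgeRel_to_hub (hM : 1 ≤ M) {i : ℕ} (hi : 1 ≤ i)
    (hi' : i ≤ N + M - 1) :
    ∃ d ≤ N + M, relPow (wedgeRel N M) d i N := by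
  rcases le_or_gt i N with hiN | hNi
  · exact ⟨N - i, by omega, relPow_wedgeRel_of_le hi hiN (by omega)⟩
  · exact ⟨N + M - i, by omega, relPow_wedgeRel_hub_of_lt hNi hi'⟩

theorem exists_relPow_wedgeRel_from_hub (hN : 1 ≤ N) {j : ℕ} (hj : 1 ≤ j)
    (hj' : j ≤ N + M - 1) : ∃ e ≤ N + M, relPow (wedgeRel N M) e N j := by
  rcases le_or_gt j N with hjN | hNj
  · have hpath : relPow (wedgeRel N M) (j - 1 + 1) N j :=
      ⟨1, wedgeRel_hub_one, relPow_wedgeRel_of_le le_rfl hj hj'⟩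
    exact ⟨j - 1 + 1, by omega, hpath⟩
  · exact ⟨j - N, by omega, relPow_wedgeRel_of_le hN hNj.le hj'⟩

theorem closure_pair_le_closedWalkLengths_wedgeRel (hN : 1 ≤ N) (hM : 1 ≤ M) :
    AddSubmonoid.closure {N, M} ≤ closedWalkLengths (wedgeRel N M) N := by
  have hloopN : relPow (wedgeRel N M) (N - 1 + 1) N N :=
    ⟨1, wedgeRel_hub_one, relPow_wedgeRel_of_le le_rfl hN (by omega)⟩
  have hloopM := relPow_succ_of_relPow _
    (relPow_wedgeRel_of_le (b := N + M - 1) hN (by omega) le_rfl) wedgeRel_last_hub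
  rw [Nat.sub_add_cancel hN] at hloopN
  rw [show N + M - 1 - N + 1 = M by omega] at hloopM
  exact AddSubmonoid.closure_le.mpr (Set.pair_subset_iff.mpr ⟨hloopN, hloopM⟩)

end wedge

theorem wedge_mixing (N M : ℕ) (hN : 1 ≤ N) (hM : 1 ≤ M) (h : Nat.Coprime N M) :
    ∃ K : ℕ, 1 ≤ K ∧ ∀ L, L ≥ K → ∀ i j : ℕ,
      1 ≤ i → i ≤ N + M - 1 → 1 ≤ j → j ≤ N + M - 1 →
        relPow (wedgeRel N M) L i j := by
  refine ⟨(N - 1) * (M - 1) + 2 * (N + M), by omega, fun L hL i j hi hi' hj hj' => ?_⟩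
  obtain ⟨d, hd, hiN⟩ := exists_relPow_wedgeRel_to_hub hM hi hi'
  obtain ⟨e, he, hNj⟩ := exists_relPow_wedgeRel_from_hub hN hj hj'
  have hNN : L - d - e ∈ closedWalkLengths (wedgeRel N M) N :=
    closure_pair_le_closedWalkLengths_wedgeRel hN hM (h.mem_closure_pair_of_le (by omega))
  have hij := relPow_add _ (relPow_add _ hiN hNN) hNj
  rwa [show d + (L - d - e) + e = L by omega] at hij
end

section
/- For positive integers N, M with gcd(N,M) = 1, there exists K such that for every L ≥ K the N-M wedge is a factor of the loop of length L: there is a surjective map of systems from the L-loop onto the N-M wedge. -/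
section ClosedWalk

variable {α : Type*} {R : α → α → Prop} {f g : ℕ → α} {L L₁ L₂ t : ℕ}

def IsClosedWalk (R : α → α → Prop) (L : ℕ) (f : ℕ → α) : Prop :=
  f L = f 0 ∧ ∀ t < L, R (f t) (f (t + 1))

def walkEdges (L : ℕ) (f : ℕ → α) : Set (α × α) :=
  {e | ∃ t < L, (f t, f (t + 1)) = e}

def walkAppend (L₁ : ℕ) (f g : ℕ → α) (t : ℕ) : α :=
  if t < L₁ then f t else g (t - L₁)

theorem IsClosedWalk.apply_mod (hf : IsClosedWalk R L f) (ht : t ≤ L) : f (t % L) = f t := by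
  rcases ht.lt_or_eq with ht | rfl
  · rw [Nat.mod_eq_of_lt ht]
  · rw [Nat.mod_self, hf.1]

theorem IsClosedWalk.rel_mod (hf : IsClosedWalk R L f) (hL : 0 < L) (t : ℕ) :
    R (f (t % L)) (f ((t + 1) % L)) := by
  have hlt := Nat.mod_lt t hL
  rw [← Nat.mod_add_mod, hf.apply_mod hlt]
  exact hf.2 _ hlt

theorem IsClosedWalk.repeat (hf : IsClosedWalk R L f) (a : ℕ) :
    IsClosedWalk R (a * L) (fun t => f (t % L)) :=
  ⟨by simp, fun t ht => hf.rel_mod (Nat.pos_of_mul_pos_left (t.zero_le.trans_lt ht)) t⟩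

theorem walkEdges_subset_repeat (hf : IsClosedWalk R L f) {a : ℕ} (ha : 1 ≤ a) :
    walkEdges L f ⊆ walkEdges (a * L) (fun t => f (t % L)) := by
  rintro _ ⟨t, ht, rfl⟩
  refine ⟨t, ht.trans_le (Nat.le_mul_of_pos_left L ha), ?_⟩
  simp only [hf.apply_mod ht.le, hf.apply_mod ht]

theorem walkAppend_of_le (hfg : f L₁ = g 0) (ht : t ≤ L₁) : walkAppend L₁ f g t = f t := by
  rcases ht.lt_or_eq with ht | rfl
  · exact if_pos ht
  · simp [walkAppend, hfg]

theorem walkAppend_add (t : ℕ) : walkAppend L₁ f g (L₁ + t) = g t := by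
  simp [walkAppend]

theorem IsClosedWalk.append (hf : IsClosedWalk R L₁ f) (hg : IsClosedWalk R L₂ g)
    (hfg : f L₁ = g 0) : IsClosedWalk R (L₁ + L₂) (walkAppend L₁ f g) := by
  refine ⟨?_, fun t ht => ?_⟩
  · rw [walkAppend_add, walkAppend_of_le hfg L₁.zero_le, hg.1, ← hfg, hf.1]
  · rcases lt_or_ge t L₁ with htL | htL
    · rw [walkAppend_of_le hfg htL.le, walkAppend_of_le hfg htL]
      exact hf.2 t htL
    · obtain ⟨s, rfl⟩ := Nat.exists_eq_add_of_le htL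
      rw [walkAppend_add, add_assoc, walkAppend_add]
      exact hg.2 s (by omega)

theorem walkEdges_append (hfg : f L₁ = g 0) :
    walkEdges L₁ f ∪ walkEdges L₂ g ⊆ walkEdges (L₁ + L₂) (walkAppend L₁ f g) := by
  rintro _ (⟨t, ht, rfl⟩ | ⟨t, ht, rfl⟩)
  · exact ⟨t, by omega, by rw [walkAppend_of_le hfg ht.le, walkAppend_of_le hfg ht]⟩
  · exact ⟨L₁ + t, by omega, by rw [walkAppend_add, add_assoc, walkAppend_add]⟩

theorem IsClosedWalk.apply_val_natCast (hf : IsClosedWalk R L f) (ht : t ≤ L) :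
    f (t : ZMod L).val = f t := by
  rw [ZMod.val_natCast, hf.apply_mod ht]

theorem IsClosedWalk.rel_val_add_one [NeZero L] (hf : IsClosedWalk R L f) (k : ZMod L) :
    R (f k.val) (f (k + 1).val) := by
  have hk : k + 1 = ((k.val + 1 : ℕ) : ZMod L) := by simp
  rw [hk, hf.apply_val_natCast k.val_lt]
  exact hf.2 _ k.val_lt

theorem IsClosedWalk.exists_zmod_of_mem_walkEdges (hf : IsClosedWalk R L f) {e : α × α}
    (he : e ∈ walkEdges L f) : ∃ k : ZMod L, f k.val = e.1 ∧ f (k + 1).val = e.2 := by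
  obtain ⟨t, ht, rfl⟩ := he
  refine ⟨t, hf.apply_val_natCast ht.le, ?_⟩
  rw [← Nat.cast_succ, hf.apply_val_natCast ht]

end ClosedWalk

theorem exists_eq_mul_add_mul_of_coprime {N M L : ℕ} (h : N.Coprime M) (hN : 1 ≤ N) (hM : 1 ≤ M)
    (hL : N * M < L) : ∃ a b, 1 ≤ a ∧ 1 ≤ b ∧ L = a * N + b * M := by
  obtain ⟨n, rfl⟩ := Nat.exists_eq_add_of_le' hN
  obtain ⟨m, rfl⟩ := Nat.exists_eq_add_of_le' hM
  have hNM : (n + 1) * (m + 1) = n * m + n + m + 1 := by ring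
  obtain ⟨a, b, hab⟩ := Nat.exists_add_mul_eq_of_gcd_dvd_of_mul_pred_le (n + 1) (m + 1)
    (L - (n + 1) - (m + 1)) (by simp [h.gcd_eq_one]) (by simp only [Nat.pred_succ]; omega)
  refine ⟨a + 1, b + 1, by omega, by omega, ?_⟩
  rw [add_mul, add_mul]
  omega

theorem wedgeRel.fst_mem_Icc {N M i j : ℕ} (hN : 1 ≤ N) (hM : 1 ≤ M) (h : wedgeRel N M i j) :
    i ∈ Set.Icc 1 (N + M - 1) := by
  unfold wedgeRel at h
  constructor <;> omega

-- The two cycles of the wedge as closed walks based at `N`: `N → 1 → ⋯ → N` and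
-- `N → N + 1 → ⋯ → N + M - 1 → N`.
def wedgeLeftCycle (N t : ℕ) : ℕ := if t = 0 then N else t

def wedgeRightCycle (N M t : ℕ) : ℕ := if t < M then N + t else N

section Wedge

variable {N M : ℕ}

theorem isClosedWalk_wedgeLeftCycle (hM : 1 ≤ M) :
    IsClosedWalk (wedgeRel N M) N (wedgeLeftCycle N) := by
  refine ⟨by simp [wedgeLeftCycle], fun t ht => ?_⟩
  simp only [wedgeLeftCycle, wedgeRel, Nat.add_one_ne_zero, if_false]
  split_ifs <;> omega

theorem isClosedWalk_wedgeRightCycle (hN : 1 ≤ N) :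
    IsClosedWalk (wedgeRel N M) M (wedgeRightCycle N M) := by
  refine ⟨by simp [wedgeRightCycle], fun t ht => ?_⟩
  simp only [wedgeRightCycle, wedgeRel]
  split_ifs <;> omega

theorem setOf_wedgeRel_subset (hN : 1 ≤ N) (hM : 1 ≤ M) :
    {e : ℕ × ℕ | wedgeRel N M e.1 e.2} ⊆
      walkEdges N (wedgeLeftCycle N) ∪ walkEdges M (wedgeRightCycle N M) := by
  rintro ⟨i, j⟩ (h : wedgeRel N M i j)
  rcases h with ⟨hi, hiM, rfl⟩ | ⟨rfl, rfl⟩ | ⟨rfl, rfl⟩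
  · rcases lt_or_ge i N with hiN | hiN
    · exact Or.inl ⟨i, hiN, by simp [wedgeLeftCycle, Nat.one_le_iff_ne_zero.mp hi]⟩
    · refine Or.inr ⟨i - N, by omega, ?_⟩
      simp only [wedgeRightCycle, Prod.mk.injEq]
      split_ifs <;> omega
  · exact Or.inl ⟨0, hN, by simp [wedgeLeftCycle]⟩
  · refine Or.inr ⟨M - 1, by omega, ?_⟩
    simp only [wedgeRightCycle, Prod.mk.injEq]
    split_ifs <;> omega

end Wedge

theorem wedge_factor_of_long_loops (N M : ℕ) (hN : 1 ≤ N) (hM : 1 ≤ M)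
    (h : Nat.Coprime N M) :
    ∃ K : ℕ, 1 ≤ K ∧ ∀ L, L ≥ K → ∃ p : ZMod L → ℕ,
      (∀ k : ZMod L, 1 ≤ p k ∧ p k ≤ N + M - 1) ∧
      (∀ k : ZMod L, wedgeRel N M (p k) (p (k + 1))) ∧
      (∀ i j : ℕ, wedgeRel N M i j → ∃ k : ZMod L, p k = i ∧ p (k + 1) = j) := by
  refine ⟨N * M + 1, by omega, fun L hL => ?_⟩
  obtain ⟨a, b, ha, hb, rfl⟩ := exists_eq_mul_add_mul_of_coprime h hN hM hL
  have : NeZero (a * N + b * M) := ⟨by positivity⟩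
  set f := walkAppend (a * N) (fun t => wedgeLeftCycle N (t % N))
    (fun t => wedgeRightCycle N M (t % M))
  have hbase : wedgeLeftCycle N (a * N % N) = wedgeRightCycle N M (0 % M) := by
    simp [wedgeLeftCycle, wedgeRightCycle]
  have hf : IsClosedWalk (wedgeRel N M) (a * N + b * M) f :=
    ((isClosedWalk_wedgeLeftCycle hM).repeat a).append
      ((isClosedWalk_wedgeRightCycle hN).repeat b) hbase
  have hcover : {e : ℕ × ℕ | wedgeRel N M e.1 e.2} ⊆ walkEdges (a * N + b * M) f :=
    (setOf_wedgeRel_subset hN hM).trans <| (Set.union_subset_union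
      (walkEdges_subset_repeat (isClosedWalk_wedgeLeftCycle hM) ha)
      (walkEdges_subset_repeat (isClosedWalk_wedgeRightCycle hN) hb)).trans
      (walkEdges_append hbase)
  exact ⟨fun k => f k.val, fun k => (hf.rel_val_add_one k).fst_mem_Icc hN hM,
    hf.rel_val_add_one, fun i j hij => hf.exists_zmod_of_mem_walkEdges (e := (i, j)) (hcover hij)⟩
end

section
/- Every transitive surjective relation φ on a nonempty finite set I is a factor of a single loop: there exist N ≥ 1 and a surjective map p : ℤ/Nℤ → I such that (p(k), p(k+1)) ∈ φ for all k and every pair in φ arises as some (p(k), p(k+1)). -/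
theorem List.exists_getElem_of_pair_infix {α : Type*} {a b : α} {l : List α}
    (h : [a, b] <:+: l) : ∃ m, ∃ hm : m + 1 < l.length, l[m] = a ∧ l[m + 1] = b := by
  obtain ⟨l₁, l₂, rfl⟩ := h
  refine ⟨l₁.length, by simp, ?_, ?_⟩ <;> simp [List.getElem_append_right]

theorem ZMod.exists_apply_natCast_eq {α : Type*} (N : ℕ) [NeZero N] (f : ℕ → α)
    (hf : f N = f 0) : ∃ p : ZMod N → α, ∀ m ≤ N, p m = f m := by
  refine ⟨fun k => f k.val, fun m hm => ?_⟩
  rcases hm.lt_or_eq with hm | rfl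
  · simp [ZMod.val_natCast_of_lt hm]
  · simp [hf]

section Walks

variable {α : Type*} {R : α → α → Prop}

theorem exists_isChain_of_relPow_succ :
    ∀ {n : ℕ} {a b : α}, relPow R (n + 1) a b → ∃ T, List.IsChain R (a :: T ++ [b])
  | 0, _, _, ⟨_, hab, rfl⟩ => ⟨[], List.IsChain.cons_cons hab (.singleton _)⟩
  | _ + 1, _, _, ⟨c, hac, hcb⟩ =>
    let ⟨T, hT⟩ := exists_isChain_of_relPow_succ hcb
    ⟨c :: T, hT.cons_cons hac⟩

theorem exists_isChain_containing_edges (hconn : ∀ a b, ∃ T, List.IsChain R (a :: T ++ [b]))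
    (es : List (α × α)) (hes : ∀ e ∈ es, R e.1 e.2) (a b : α) :
    ∃ T, List.IsChain R (a :: T ++ [b]) ∧ ∀ e ∈ es, [e.1, e.2] <:+: a :: T ++ [b] := by
  induction es generalizing a with
  | nil => simpa using hconn a b
  | cons e es ih =>
    obtain ⟨T₁, hT₁⟩ := hconn a e.1
    obtain ⟨T₂, hT₂, hcov⟩ := ih (fun e' he' => hes e' (.tail _ he')) e.2
    refine ⟨T₁ ++ e.1 :: e.2 :: T₂, ?_, ?_⟩
    · simpa [List.isChain_cons_append_cons_cons] using ⟨hT₁, hes e (.head _), hT₂⟩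
    · rintro e' (_ | ⟨_, he'⟩)
      · exact ⟨a :: T₁, T₂ ++ [b], by simp⟩
      · exact (hcov e' he').trans ⟨a :: T₁ ++ [e.1], [], by simp⟩

theorem exists_zmod_loop_of_isChain {x : α} {T : List α} (h : List.IsChain R (x :: T ++ [x])) :
    ∃ N, 1 ≤ N ∧ ∃ p : ZMod N → α, (∀ k, R (p k) (p (k + 1))) ∧
      ∀ a b, [a, b] <:+: x :: T ++ [x] → ∃ k, p k = a ∧ p (k + 1) = b := by
  set c := x :: T ++ [x]
  have hlen : c.length = T.length + 2 := by simp [c]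
  obtain ⟨p, hp⟩ := ZMod.exists_apply_natCast_eq (T.length + 1) (c.getD · x) (by simp [c])
  have hstep : ∀ m < T.length + 1, p m = c.getD m x ∧ p (m + 1) = c.getD (m + 1) x :=
    fun m hm => ⟨hp m hm.le, by exact_mod_cast hp (m + 1) hm⟩
  refine ⟨T.length + 1, by omega, p, fun k => ?_, fun a b hab => ?_⟩
  · have hk := ZMod.val_lt k
    obtain ⟨h₁, h₂⟩ := hstep k.val hk
    rw [ZMod.natCast_zmod_val] at h₁ h₂
    rw [h₁, h₂, List.getD_eq_getElem _ _ (by omega), List.getD_eq_getElem _ _ (by omega)]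
    exact List.isChain_iff_getElem.mp h _ (by omega)
  · obtain ⟨m, hm, rfl, rfl⟩ := List.exists_getElem_of_pair_infix hab
    obtain ⟨h₁, h₂⟩ := hstep m (by omega)
    exact ⟨m, h₁.trans (List.getD_eq_getElem _ _ _), h₂.trans (List.getD_eq_getElem _ _ _)⟩

end Walks

theorem transitive_rel_factor_of_loop_general {I : Type*} [Finite I] [Nonempty I]
    (φ : I → I → Prop)
    (hl : ∀ i : I, ∃ j, φ i j)
    (htrans : ∀ i j : I, ∃ n, 1 ≤ n ∧ relPow φ n i j) :
    ∃ N : ℕ, 1 ≤ N ∧ ∃ p : ZMod N → I,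
      Function.Surjective p ∧
      (∀ k : ZMod N, φ (p k) (p (k + 1))) ∧
      (∀ i j : I, φ i j → ∃ k : ZMod N, p k = i ∧ p (k + 1) = j) := by
  classical
  have hconn : ∀ a b, ∃ T, List.IsChain φ (a :: T ++ [b]) := fun a b => by
    obtain ⟨n, hn, hab⟩ := htrans a b
    obtain ⟨n, rfl⟩ := Nat.exists_eq_add_one.mpr hn
    exact exists_isChain_of_relPow_succ hab
  obtain ⟨pairs, -, hpairs⟩ := Finite.exists_univ_list (I × I)
  obtain ⟨T, hT, hcov⟩ := exists_isChain_containing_edges hconn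
    (pairs.filter fun e => φ e.1 e.2) (by simp) (Classical.arbitrary I) (Classical.arbitrary I)
  obtain ⟨N, hN, p, hstep, hedge⟩ := exists_zmod_loop_of_isChain hT
  have hcover : ∀ i j, φ i j → ∃ k, p k = i ∧ p (k + 1) = j :=
    fun i j hij => hedge i j (hcov (i, j) (by simp [hpairs, hij]))
  refine ⟨N, hN, p, fun i => ?_, hstep, hcover⟩
  obtain ⟨j, hij⟩ := hl i
  obtain ⟨k, hk, -⟩ := hcover i j hij
  exact ⟨k, hk⟩

theorem transitive_rel_factor_of_loop {I : Type*} [Finite I] [Nonempty I]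
    (φ : I → I → Prop)
    (hl : ∀ i : I, ∃ j, φ i j) (hr : ∀ j : I, ∃ i, φ i j)
    (htrans : ∀ i j : I, ∃ n, 1 ≤ n ∧ relPow φ n i j) :
    ∃ N : ℕ, 1 ≤ N ∧ ∃ p : ZMod N → I,
      Function.Surjective p ∧
      (∀ k : ZMod N, φ (p k) (p (k + 1))) ∧
      (∀ i j : I, φ i j → ∃ k : ZMod N, p k = i ∧ p (k + 1) = j) :=
  transitive_rel_factor_of_loop_general φ hl htrans
end

section
/- If f is a surjective continuous map of a compact metric space X, α : X → I is a surjective locally constant map to a finite set, and f is chain transitive, then the induced relation f^α on I is transitive (every pair in I is connected by an f^α-path). -/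
theorem relPow.map {X I : Type*} {R : X → X → Prop} {S : I → I → Prop} {α : X → I}
    (h : ∀ a b, R a b → S (α a) (α b)) :
    ∀ {n x y}, relPow R n x y → relPow S n (α x) (α y)
  | 0, _, _, rfl => rfl
  | _ + 1, _, _, ⟨b, hab, hbc⟩ => ⟨α b, h _ _ hab, relPow.map h hbc⟩

theorem IsLocallyConstant.exists_pos_forall_dist_lt_imp_eq {X I : Type*} [PseudoMetricSpace X]
    [CompactSpace X] {α : X → I} (hα : IsLocallyConstant α) :
    ∃ δ > 0, ∀ a b, dist a b < δ → α a = α b := by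
  obtain ⟨δ, hδ, hball⟩ := lebesgue_number_lemma_of_metric isCompact_univ
    (fun i => hα.isOpen_fiber i) (fun x _ => Set.mem_iUnion.2 ⟨α x, rfl⟩)
  refine ⟨δ, hδ, fun a b hab => ?_⟩
  obtain ⟨i, hi⟩ := hball a (Set.mem_univ a)
  have ha : α a = i := hi (Metric.mem_ball_self hδ)
  have hb : α b = i := hi (Metric.mem_ball'.2 hab)
  rw [ha, hb]

theorem chain_transitive_representation_general {X : Type*} [MetricSpace X] [CompactSpace X]
    {I : Type*}
    (f : X → X)
    (hct : ∀ ε : ℝ, 0 < ε → ∀ x y : X, ∃ n, 1 ≤ n ∧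
      relPow (fun a b => ∃ u : X, dist a u < ε ∧ dist (f u) b < ε) n x y)
    (α : X → I) (hαc : IsLocallyConstant α) (hα : Function.Surjective α) :
    ∀ i j : I, ∃ n, 1 ≤ n ∧
      relPow (fun a b => ∃ x : X, α x = a ∧ α (f x) = b) n i j := by
  obtain ⟨δ, hδ, hconst⟩ := hαc.exists_pos_forall_dist_lt_imp_eq
  intro i j
  obtain ⟨x, rfl⟩ := hα i
  obtain ⟨y, rfl⟩ := hα j
  obtain ⟨n, hn, hchain⟩ := hct δ hδ x y
  refine ⟨n, hn, hchain.map ?_⟩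
  -- A `δ`-pseudo-orbit step `a ~ u ↦ f u ~ b` is read by `α` as the step `α u ↦ α (f u)`.
  rintro a b ⟨u, hau, hub⟩
  exact ⟨u, (hconst a u hau).symm, hconst (f u) b hub⟩

theorem chain_transitive_representation {X : Type*} [MetricSpace X] [CompactSpace X]
    {I : Type*} [Finite I]
    (f : X → X) (hf : Continuous f) (hfs : Function.Surjective f)
    (hct : ∀ ε : ℝ, 0 < ε → ∀ x y : X, ∃ n, 1 ≤ n ∧
      relPow (fun a b => ∃ u : X, dist a u < ε ∧ dist (f u) b < ε) n x y)
    (α : X → I) (hαc : IsLocallyConstant α) (hα : Function.Surjective α) :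
    ∀ i j : I, ∃ n, 1 ≤ n ∧
      relPow (fun a b => ∃ x : X, α x = a ∧ α (f x) = b) n i j :=
  chain_transitive_representation_general f hct α hαc hα
end

section
/- Let {p_{n+1,n} : (A_{n+1}, R_{n+1}) → (A_n, R_n)} be an inverse sequence of compact systems (surjective maps with (p × p)(R_{n+1}) = R_n) such that for every n there exists m > n with p_{m,n} ∘ R_m a function (the Shimomura condition). Then the inverse limit relation R_∞ on A_∞ is a (single-valued) surjective continuous map. -/
/-- The bonding map `p_{n+k,n} : A (n+k) → A n` of an inverse sequence. -/
def bond {A : ℕ → Type*} (p : ∀ n, A (n + 1) → A n) : ∀ (n k : ℕ), A (n + k) → A n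
  | _, 0, a => a
  | n, k + 1, a => bond p n k (p (n + k) a)

/-!
For a thread `z`, the sets `{w | (z n, w n) ∈ R n}` form a decreasing sequence of closed
subsets of the compact space `A_∞`, nonempty because every `R n` is left-total and every
projection `A_∞ → A n` is onto; so `R_∞` is left-total, and likewise right-total. The Shimomura
condition makes `R_∞` single-valued: if `z R_∞ w` and `z R_∞ w'`, then
`w n = p_{n+k,n} (w (n+k)) = p_{n+k,n} (w' (n+k)) = w' n`. Finally `R_∞` is closed, and a map
into a compact space with closed graph is continuous.
-/

open Function Set

theorem continuous_of_isClosed_graph {X Y : Type*} [TopologicalSpace X] [TopologicalSpace Y]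
    [CompactSpace Y] {f : X → Y} (hf : IsClosed {q : X × Y | f q.1 = q.2}) : Continuous f := by
  refine continuous_iff_isClosed.2 fun K hK => ?_
  have hpre : f ⁻¹' K = Prod.fst '' ({q : X × Y | f q.1 = q.2} ∩ Prod.snd ⁻¹' K) := by
    ext x
    simp
  rw [hpre]
  exact isClosedMap_fst_of_compactSpace _ (hf.inter (hK.preimage continuous_snd))

namespace InverseSequence

variable {A : ℕ → Type*} (p : ∀ n, A (n + 1) → A n)

abbrev limit := {z : ∀ n, A n // ∀ n, p n (z (n + 1)) = z n}

def limitRel (R : ∀ n, A n → A n → Prop) (z w : limit p) : Prop :=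
  ∀ n, R n (z.1 n) (w.1 n)

variable {p}

theorem bond_limit (z : limit p) (n k : ℕ) : bond p n k (z.1 (n + k)) = z.1 n := by
  induction k with
  | zero => rfl
  | succ k ih => exact (congrArg (bond p n k) (z.2 (n + k))).trans ih

theorem exists_limit_apply_eq (hps : ∀ n, Surjective (p n)) (n : ℕ) (b : A n) :
    ∃ z : limit p, z.1 n = b := by
  -- At level `0`, lift `b` along sections of the `p m`; at level `n + 1`, shift the sequence.
  induction n generalizing A with
  | zero =>
    choose s hs using hps
    exact ⟨⟨fun m => Nat.rec (motive := A) b (fun m x => s m x) m, fun m => hs m _⟩, rfl⟩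
  | succ n ih =>
    obtain ⟨z, hz⟩ := ih (fun m => hps (m + 1)) b
    refine ⟨⟨fun m => Nat.casesOn (motive := A) m (p 0 (z.1 0)) fun m => z.1 m, ?_⟩, hz⟩
    rintro (_ | m)
    · rfl
    · exact z.2 m

theorem limitRel_unique {R : ∀ n, A n → A n → Prop}
    (hshim : ∀ n, ∃ k, ∀ a b c : A (n + k),
      R (n + k) a b → R (n + k) a c → bond p n k b = bond p n k c)
    {z w w' : limit p} (hw : limitRel p R z w) (hw' : limitRel p R z w') : w = w' := by
  refine Subtype.ext (funext fun n => ?_)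
  obtain ⟨k, hk⟩ := hshim n
  simpa only [bond_limit] using hk _ _ _ (hw (n + k)) (hw' (n + k))

variable [∀ n, TopologicalSpace (A n)]

theorem isClosed_setOf_limit [∀ n, T2Space (A n)] (hpc : ∀ n, Continuous (p n)) :
    IsClosed {z : ∀ n, A n | ∀ n, p n (z (n + 1)) = z n} := by
  simp only [ofPred_forall]
  exact isClosed_iInter fun n => isClosed_eq (by fun_prop) (by fun_prop)

theorem compactSpace_limit [∀ n, T2Space (A n)] [∀ n, CompactSpace (A n)]
    (hpc : ∀ n, Continuous (p n)) : CompactSpace (limit p) :=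
  isCompact_iff_compactSpace.1 (isClosed_setOf_limit hpc).isCompact

theorem continuous_limit_apply (n : ℕ) : Continuous fun z : limit p => z.1 n :=
  (continuous_apply n).comp continuous_subtype_val

variable {R : ∀ n, A n → A n → Prop}

theorem isClosed_limitRel (hRclosed : ∀ n, IsClosed {q : A n × A n | R n q.1 q.2}) :
    IsClosed {q : limit p × limit p | limitRel p R q.1 q.2} := by
  simp only [limitRel, ofPred_forall]
  exact isClosed_iInter fun n =>
    (hRclosed n).preimage
      (((continuous_limit_apply n).comp continuous_fst).prodMk
        ((continuous_limit_apply n).comp continuous_snd))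

theorem limitRel_leftTotal [∀ n, T2Space (A n)] [∀ n, CompactSpace (A n)]
    (hRclosed : ∀ n, IsClosed {q : A n × A n | R n q.1 q.2})
    (hpc : ∀ n, Continuous (p n)) (hps : ∀ n, Surjective (p n))
    (hRl : ∀ n (a : A n), ∃ b, R n a b) (hRmap : ∀ n a b, R (n + 1) a b → R n (p n a) (p n b))
    (z : limit p) : ∃ w, limitRel p R z w := by
  have := compactSpace_limit hpc
  let C : ℕ → Set (limit p) := fun n => {w | R n (z.1 n) (w.1 n)}
  have hC_closed : ∀ n, IsClosed (C n) := fun n =>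
    (hRclosed n).preimage (continuous_const.prodMk (continuous_limit_apply n))
  have hC_anti : ∀ n, C (n + 1) ⊆ C n := fun n w hw => by
    have h := hRmap n _ _ hw
    rwa [z.2 n, w.2 n] at h
  have hC_nonempty : ∀ n, (C n).Nonempty := fun n => by
    obtain ⟨b, hb⟩ := hRl n (z.1 n)
    obtain ⟨w, rfl⟩ := exists_limit_apply_eq hps n b
    exact ⟨w, hb⟩
  obtain ⟨w, hw⟩ := IsCompact.nonempty_iInter_of_sequence_nonempty_isCompact_isClosed C
    hC_anti hC_nonempty (hC_closed 0).isCompact hC_closed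
  exact ⟨w, mem_iInter.1 hw⟩

theorem limitRel_rightTotal [∀ n, T2Space (A n)] [∀ n, CompactSpace (A n)]
    (hRclosed : ∀ n, IsClosed {q : A n × A n | R n q.1 q.2})
    (hpc : ∀ n, Continuous (p n)) (hps : ∀ n, Surjective (p n))
    (hRr : ∀ n (b : A n), ∃ a, R n a b) (hRmap : ∀ n a b, R (n + 1) a b → R n (p n a) (p n b))
    (w : limit p) : ∃ z, limitRel p R z w :=
  limitRel_leftTotal (R := fun n a b => R n b a) (fun n => (hRclosed n).preimage continuous_swap)
    hpc hps hRr (fun n a b => hRmap n b a) w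

end InverseSequence

theorem shimomura_limit_is_map {A : ℕ → Type*} [∀ n, MetricSpace (A n)]
    [∀ n, CompactSpace (A n)]
    (R : ∀ n, A n → A n → Prop)
    (hRclosed : ∀ n, IsClosed {q : A n × A n | R n q.1 q.2})
    (hRl : ∀ n (a : A n), ∃ b, R n a b) (hRr : ∀ n (b : A n), ∃ a, R n a b)
    (p : ∀ n, A (n + 1) → A n)
    (hpc : ∀ n, Continuous (p n)) (hps : ∀ n, Function.Surjective (p n))
    (hcompat : ∀ n (a b : A n), R n a b ↔
      ∃ a' b' : A (n + 1), R (n + 1) a' b' ∧ p n a' = a ∧ p n b' = b)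
    (hshim : ∀ n, ∃ k, 1 ≤ k ∧ ∀ a b c : A (n + k),
      R (n + k) a b → R (n + k) a c → bond p n k b = bond p n k c) :
    ∃ F : {z : ∀ n, A n // ∀ n, p n (z (n + 1)) = z n} →
          {z : ∀ n, A n // ∀ n, p n (z (n + 1)) = z n},
      Continuous F ∧ Function.Surjective F ∧
        ∀ z w : {z : ∀ n, A n // ∀ n, p n (z (n + 1)) = z n},
          (∀ n, R n (z.1 n) (w.1 n)) ↔ F z = w := by
  open InverseSequence in
  have hRmap : ∀ n a b, R (n + 1) a b → R n (p n a) (p n b) := fun n a b h =>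
    (hcompat n _ _).2 ⟨a, b, h, rfl, rfl⟩
  choose F hF using limitRel_leftTotal hRclosed hpc hps hRl hRmap
  have hgraph : ∀ z w, limitRel p R z w ↔ F z = w := fun z w =>
    ⟨limitRel_unique (fun n => (hshim n).imp fun _ hk => hk.2) (hF z), by rintro rfl; exact hF z⟩
  have := compactSpace_limit hpc
  refine ⟨F, continuous_of_isClosed_graph ?_, fun w => ?_, hgraph⟩
  · simpa only [hgraph] using isClosed_limitRel (p := p) hRclosed
  · obtain ⟨z, hz⟩ := limitRel_rightTotal hRclosed hpc hps hRr hRmap w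
    exact ⟨z, (hgraph z w).1 hz⟩
end

section
/- Let {p_{n+1,n} : (A_{n+1}, R_{n+1}) → (A_n, R_n)} be an inverse sequence of systems with each A_n finite, and suppose the inverse limit relation R_∞ is a function. Then the sequence satisfies the Shimomura condition: for every n there exists m > n such that p_{m,n} ∘ R_m is a function. -/
open CategoryTheory

theorem exists_thread_of_finite {S : ℕ → Type*} [∀ m, Finite (S m)] [∀ m, Nonempty (S m)]
    (f : ∀ m, S (m + 1) → S m) : ∃ u : ∀ m, S m, ∀ m, f m (u (m + 1)) = u m := by
  let F : ℕᵒᵖ ⥤ Type _ := Functor.ofOpSequence fun m => TypeCat.ofHom (f m)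
  have : ∀ j, Finite (F.obj j) := fun j => inferInstanceAs (Finite (S j.unop))
  have : ∀ j, Nonempty (F.obj j) := fun j => inferInstanceAs (Nonempty (S j.unop))
  obtain ⟨u, hu⟩ := nonempty_sections_of_finite_inverse_system F
  refine ⟨fun m => u ⟨m⟩, fun m => ?_⟩
  have hstep := hu (homOfLE (Nat.le_add_right m 1)).op
  simp only [F, Functor.ofOpSequence_map_homOfLE_succ] at hstep
  exact hstep

theorem nonempty_of_le {S : ℕ → Type*} (f : ∀ m, S (m + 1) → S m) {m m' : ℕ} (h : m ≤ m') :
    Nonempty (S m') → Nonempty (S m) := by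
  induction h with
  | refl => exact id
  | step _ ih => exact fun ⟨x⟩ => ih ⟨f _ x⟩

section SeparatedFork

variable {A : ℕ → Type*} (R : ∀ n, A n → A n → Prop) (p : ∀ n, A (n + 1) → A n)

/-- A `V` in `R m` whose tips have distinct images at level `n`; for `m < n` the last
condition is vacuous. -/
structure SeparatedFork (n m : ℕ) where
  root : A m
  left : A m
  right : A m
  rel_left : R m root left
  rel_right : R m root right
  separated : ∀ k (h : n + k = m), bond p n k (h ▸ left) ≠ bond p n k (h ▸ right)

variable {R p} {n : ℕ}

instance [∀ m, Finite (A m)] (m : ℕ) : Finite (SeparatedFork R p n m) :=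
  Finite.of_injective (fun v => (v.root, v.left, v.right)) fun v w h => by
    cases v; cases w; simp_all

def SeparatedFork.ofBondNe {k : ℕ} {a b c : A (n + k)} (hab : R (n + k) a b)
    (hac : R (n + k) a c) (hbc : bond p n k b ≠ bond p n k c) : SeparatedFork R p n (n + k) where
  root := a
  left := b
  right := c
  rel_left := hab
  rel_right := hac
  separated k' h := by
    obtain rfl : k' = k := by omega
    exact hbc

def SeparatedFork.proj (hR : ∀ m a b, R (m + 1) a b → R m (p m a) (p m b)) (m : ℕ)
    (v : SeparatedFork R p n (m + 1)) : SeparatedFork R p n m where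
  root := p m v.root
  left := p m v.left
  right := p m v.right
  rel_left := hR m _ _ v.rel_left
  rel_right := hR m _ _ v.rel_right
  separated k h := by
    subst h
    exact v.separated (k + 1) rfl

theorem SeparatedFork.nonempty (hR : ∀ m a b, R (m + 1) a b → R m (p m a) (p m b))
    (hV : ∀ k, 1 ≤ k → ∃ a b c : A (n + k),
      R (n + k) a b ∧ R (n + k) a c ∧ bond p n k b ≠ bond p n k c) (m : ℕ) :
    Nonempty (SeparatedFork R p n m) := by
  obtain ⟨a, b, c, hab, hac, hbc⟩ := hV (m + 1) le_add_self
  exact nonempty_of_le (SeparatedFork.proj hR) (by omega) ⟨ofBondNe hab hac hbc⟩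

end SeparatedFork

theorem limit_map_implies_shimomura_general {A : ℕ → Type*} [∀ n, Finite (A n)]
    (R : ∀ n, A n → A n → Prop)
    (p : ∀ n, A (n + 1) → A n)
    (hcompat : ∀ n (a b : A n), R n a b ↔
      ∃ a' b' : A (n + 1), R (n + 1) a' b' ∧ p n a' = a ∧ p n b' = b)
    (hfun : ∀ z w w' : {z : ∀ n, A n // ∀ n, p n (z (n + 1)) = z n},
      (∀ n, R n (z.1 n) (w.1 n)) → (∀ n, R n (z.1 n) (w'.1 n)) → w = w') :
    ∀ n, ∃ k, 1 ≤ k ∧ ∀ a b c : A (n + k),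
      R (n + k) a b → R (n + k) a c → bond p n k b = bond p n k c := by
  intro n
  by_contra! hV
  have hR : ∀ m a b, R (m + 1) a b → R m (p m a) (p m b) :=
    fun m a b h => (hcompat m _ _).2 ⟨a, b, h, rfl, rfl⟩
  have : ∀ m, Nonempty (SeparatedFork R p n m) := SeparatedFork.nonempty hR hV
  obtain ⟨u, hu⟩ := exists_thread_of_finite (SeparatedFork.proj (n := n) hR)
  have hlr := hfun ⟨fun m => (u m).root, fun m => congrArg SeparatedFork.root (hu m)⟩
    ⟨fun m => (u m).left, fun m => congrArg SeparatedFork.left (hu m)⟩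
    ⟨fun m => (u m).right, fun m => congrArg SeparatedFork.right (hu m)⟩
    (fun m => (u m).rel_left) (fun m => (u m).rel_right)
  exact (u n).separated 0 rfl (congrArg (fun w => w.1 n) hlr)

theorem limit_map_implies_shimomura {A : ℕ → Type*} [∀ n, Finite (A n)]
    [∀ n, Nonempty (A n)]
    (R : ∀ n, A n → A n → Prop)
    (hRl : ∀ n (a : A n), ∃ b, R n a b) (hRr : ∀ n (b : A n), ∃ a, R n a b)
    (p : ∀ n, A (n + 1) → A n)
    (hps : ∀ n, Function.Surjective (p n))
    (hcompat : ∀ n (a b : A n), R n a b ↔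
      ∃ a' b' : A (n + 1), R (n + 1) a' b' ∧ p n a' = a ∧ p n b' = b)
    (hfun : ∀ z w w' : {z : ∀ n, A n // ∀ n, p n (z (n + 1)) = z n},
      (∀ n, R n (z.1 n) (w.1 n)) → (∀ n, R n (z.1 n) (w'.1 n)) → w = w') :
    ∀ n, ∃ k, 1 ≤ k ∧ ∀ a b c : A (n + k),
      R (n + k) a b → R (n + k) a c → bond p n k b = bond p n k c :=
  limit_map_implies_shimomura_general R p hcompat hfun
end

section
/- Let f be a homeomorphism of a compact metric space X that is not periodic (fⁿ ≠ id for all n ≥ 1). Then for every M ≥ 1 the pointed loop (1-M wedge) is a factor of (X, f): there exists a surjective locally constant map α : X → {1, …, M} with f^α equal to the relation {(i,i+1) : 1 ≤ i < M} ∪ {(1,1), (M,1)}. -/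
/-!
Since `f^[M!] ≠ id`, some point `x₀` differs from its first `M` iterates, and total separation
gives a clopen `U ∋ x₀` no point of which returns to `U` within `M` steps. Label the points of
`fᵏ(U)`, `k < M`, by `k + 1` and all other points by `1`. Along the orbit of `u ∈ U` the labels
read `1, 2, …, M, 1, 1`, which realises every edge of the loop; conversely a point outside the
levels `fᵏ(U)`, `k < M`, and its image both carry label `1`, so no other edge occurs.
-/

/-- The pointed loop (1-M wedge) of length `M` on `{1, …, M} ⊆ ℕ`. -/
def pointedLoop (M : ℕ) (i j : ℕ) : Prop :=
  (1 ≤ i ∧ i < M ∧ j = i + 1) ∨ (i = 1 ∧ j = 1) ∨ (i = M ∧ j = 1)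

open Function Finset

theorem Function.exists_forall_iterate_ne_self {X : Type*} {f : X → X} {N : ℕ}
    (hf : f^[N.factorial] ≠ id) : ∃ x, ∀ k, 0 < k → k ≤ N → f^[k] x ≠ x := by
  obtain ⟨x, hx⟩ := Function.ne_iff.1 hf
  exact ⟨x, fun k hk hkN hper =>
    hx ((show IsPeriodicPt f k x from hper).trans_dvd (Nat.dvd_factorial hk hkN))⟩

def NoReturnWithin {X : Type*} (f : X → X) (U : Set X) (M : ℕ) : Prop :=
  ∀ u ∈ U, ∀ k, 0 < k → k ≤ M → f^[k] u ∉ U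

theorem exists_isClopen_noReturnWithin {X : Type*} [TopologicalSpace X] [TotallySeparatedSpace X]
    {f : X → X} (hf : Continuous f) {x : X} {N : ℕ} (hx : ∀ k, 0 < k → k ≤ N → f^[k] x ≠ x) :
    ∃ U, IsClopen U ∧ x ∈ U ∧ NoReturnWithin f U N := by
  induction N with
  | zero => exact ⟨Set.univ, isClopen_univ, trivial, fun _ _ k hk hk0 => by omega⟩
  | succ N ih =>
    obtain ⟨U, hUc, hxU, hU⟩ := ih fun k hk hkN => hx k hk (by omega)
    obtain ⟨V, hVc, hxV, hfxV⟩ :=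
      exists_isClopen_of_totally_separated (hx (N + 1) N.succ_pos le_rfl).symm
    refine ⟨U ∩ V ∩ f^[N + 1] ⁻¹' Vᶜ, (hUc.inter hVc).inter (hVc.compl.preimage (hf.iterate _)),
      ⟨⟨hxU, hxV⟩, hfxV⟩, fun u ⟨⟨hu, _⟩, hfu⟩ k hk hkN ⟨⟨hfkU, hfkV⟩, _⟩ => ?_⟩
    rcases Nat.lt_or_eq_of_le hkN with hkN | rfl
    · exact hU u hu k hk (by omega) hfkU
    · exact hfu hfkV

section Tower

variable {X : Type*} {f : X ≃ X} {U : Set X} {M : ℕ}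

/-- Under `NoReturnWithin f U M` at most one summand is nonzero. -/
noncomputable def towerLevel (f : X ≃ X) (U : Set X) (M : ℕ) (x : X) : ℕ :=
  1 + ∑ k ∈ range M, U.indicator (fun _ => k) (f.symm^[k] x)

theorem isLocallyConstant_towerLevel [TopologicalSpace X] (hf : Continuous f.symm)
    (hU : IsClopen U) : IsLocallyConstant (towerLevel f U M) :=
  (IsLocallyConstant.iff_continuous _).2 <| continuous_const.add <|
    continuous_finsetSum _ fun _ _ => (hU.continuous_indicator continuous_const).comp (hf.iterate _)

theorem NoReturnWithin.iterate_symm_mem_unique (hU : NoReturnWithin f U M) {x : X} {j k : ℕ}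
    (hj : j ≤ M) (hk : k ≤ M) (hjx : f.symm^[j] x ∈ U) (hkx : f.symm^[k] x ∈ U) : j = k := by
  wlog hjk : j ≤ k generalizing j k
  · exact (this hk hj hkx hjx (by omega)).symm
  by_contra hne
  obtain ⟨d, rfl⟩ := Nat.exists_eq_add_of_le' hjk
  refine hU _ hkx d (by omega) (by omega) ?_
  rwa [iterate_add_apply, f.rightInverse_symm.iterate]

theorem NoReturnWithin.towerLevel_eq (hU : NoReturnWithin f U M) {x : X} {k : ℕ} (hk : k < M)
    (hx : f.symm^[k] x ∈ U) : towerLevel f U M x = k + 1 := by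
  rw [towerLevel, sum_eq_single_of_mem k (mem_range.2 hk), Set.indicator_of_mem hx, add_comm]
  intro j hj hjk
  exact Set.indicator_of_notMem
    (fun hj' => hjk (hU.iterate_symm_mem_unique (mem_range.1 hj).le hk.le hj' hx)) _

theorem towerLevel_eq_one {x : X} (hx : ∀ k, 0 < k → k < M → f.symm^[k] x ∉ U) :
    towerLevel f U M x = 1 := by
  refine add_eq_left.2 (sum_eq_zero fun k hk => ?_)
  rcases Nat.eq_zero_or_pos k with rfl | hk0
  · exact Set.indicator_apply_eq_zero.2 fun _ => rfl
  · exact Set.indicator_of_notMem (hx k hk0 (mem_range.1 hk)) _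

theorem NoReturnWithin.towerLevel_iterate (hU : NoReturnWithin f U M) {u : X} (hu : u ∈ U)
    {t : ℕ} (ht : t < M) : towerLevel f U M (f^[t] u) = t + 1 :=
  hU.towerLevel_eq ht (by rwa [f.leftInverse_symm.iterate])

theorem NoReturnWithin.towerLevel_iterate_eq_one (hU : NoReturnWithin f U M) {u : X} (hu : u ∈ U)
    {t : ℕ} (hMt : M ≤ t) (htM : t ≤ M + 1) : towerLevel f U M (f^[t] u) = 1 := by
  refine towerLevel_eq_one fun k hk hkM => ?_
  obtain ⟨s, rfl⟩ := Nat.exists_eq_add_of_le (show k ≤ t by omega)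
  rw [iterate_add_apply, f.leftInverse_symm.iterate]
  exact hU u hu s (by omega) (by omega)

theorem exists_iterate_or_towerLevel_eq_one (f : X ≃ X) (U : Set X) (M : ℕ) (x : X) :
    (∃ u ∈ U, ∃ t < M, f^[t] u = x) ∨
      towerLevel f U M x = 1 ∧ towerLevel f U M (f x) = 1 := by
  by_cases h : ∃ k < M, f.symm^[k] x ∈ U
  · obtain ⟨k, hk, hkx⟩ := h
    exact .inl ⟨_, hkx, k, hk, f.rightInverse_symm.iterate k x⟩
  push Not at h
  refine .inr ⟨towerLevel_eq_one fun k _ hk => h k hk, towerLevel_eq_one fun k hk hkM => ?_⟩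
  obtain ⟨s, rfl⟩ := Nat.exists_eq_add_of_le' (Nat.one_le_of_lt hk)
  rw [iterate_succ_apply, f.symm_apply_apply]
  exact h s (by omega)

theorem NoReturnWithin.towerLevel_le (hU : NoReturnWithin f U M) (hM : 0 < M) (x : X) :
    towerLevel f U M x ≤ M := by
  rcases exists_iterate_or_towerLevel_eq_one f U M x with ⟨u, hu, t, ht, rfl⟩ | ⟨hx, -⟩
  · rw [hU.towerLevel_iterate hu ht]
    omega
  · omega

theorem NoReturnWithin.pointedLoop_towerLevel (hU : NoReturnWithin f U M) (x : X) :
    pointedLoop M (towerLevel f U M x) (towerLevel f U M (f x)) := by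
  rcases exists_iterate_or_towerLevel_eq_one f U M x with ⟨u, hu, t, ht, rfl⟩ | ⟨hx, hfx⟩
  · rw [← iterate_succ_apply' f, hU.towerLevel_iterate hu ht]
    rcases Nat.lt_or_eq_of_le (Nat.succ_le_of_lt ht) with ht' | ht'
    · rw [hU.towerLevel_iterate hu ht']
      exact .inl ⟨by omega, ht', rfl⟩
    · rw [hU.towerLevel_iterate_eq_one hu ht'.ge (by omega)]
      exact .inr (.inr ⟨ht', rfl⟩)
  · rw [hx, hfx]
    exact .inr (.inl ⟨rfl, rfl⟩)

theorem NoReturnWithin.exists_towerLevel_of_pointedLoop (hU : NoReturnWithin f U M) {u : X}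
    (hu : u ∈ U) (hM : 0 < M) {i j : ℕ} (hij : pointedLoop M i j) :
    ∃ x, towerLevel f U M x = i ∧ towerLevel f U M (f x) = j := by
  have hedge : ∀ i, 1 ≤ i → i ≤ M → ∃ x, towerLevel f U M x = i ∧
      towerLevel f U M (f x) = if i < M then i + 1 else 1 := fun i hi hiM => by
    refine ⟨f^[i - 1] u, by rw [hU.towerLevel_iterate hu (by omega), Nat.sub_add_cancel hi], ?_⟩
    rw [← iterate_succ_apply' f, Nat.succ_eq_add_one, Nat.sub_add_cancel hi]
    split_ifs with h
    · exact hU.towerLevel_iterate hu h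
    · exact hU.towerLevel_iterate_eq_one hu (by omega) (by omega)
  rcases hij with ⟨hi, hiM, rfl⟩ | ⟨rfl, rfl⟩ | ⟨rfl, rfl⟩
  · simpa [hiM] using hedge i hi hiM.le
  · exact ⟨f^[M] u, hU.towerLevel_iterate_eq_one hu le_rfl (by omega),
      by rw [← iterate_succ_apply' f, hU.towerLevel_iterate_eq_one hu (by omega) le_rfl]⟩
  · simpa using hedge i hM le_rfl

end Tower

theorem nonperiodic_represents_pointed_loop_general {X : Type*} [TopologicalSpace X]
    [CompactSpace X] [TopologicalSpace.MetrizableSpace X] [TotallyDisconnectedSpace X]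
    (f : X ≃ₜ X) (hnp : ∀ n : ℕ, 1 ≤ n → (⇑f)^[n] ≠ id) :
    ∀ M : ℕ, 1 ≤ M → ∃ α : X → ℕ,
      IsLocallyConstant α ∧
      (∀ x : X, 1 ≤ α x ∧ α x ≤ M) ∧
      (∀ i : ℕ, 1 ≤ i → i ≤ M → ∃ x : X, α x = i) ∧
      (∀ i j : ℕ, (∃ x : X, α x = i ∧ α (f x) = j) ↔ pointedLoop M i j) := by
  intro M hM
  have : TotallySeparatedSpace X := loc_compact_t2_tot_disc_iff_tot_sep.1 inferInstance
  obtain ⟨x₀, hx₀⟩ := exists_forall_iterate_ne_self (hnp _ M.factorial_pos)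
  obtain ⟨U, hUc, hx₀U, hU⟩ := exists_isClopen_noReturnWithin f.continuous hx₀
  replace hU : NoReturnWithin f.toEquiv U M := hU
  refine ⟨towerLevel f.toEquiv U M, isLocallyConstant_towerLevel f.symm.continuous hUc,
    fun x => ⟨Nat.le_add_right _ _, hU.towerLevel_le hM x⟩, fun i hi hiM => ?_,
    fun i j => ⟨fun ⟨x, hi, hj⟩ => hi ▸ hj ▸ hU.pointedLoop_towerLevel x,
      hU.exists_towerLevel_of_pointedLoop hx₀U hM⟩⟩
  exact ⟨_, (hU.towerLevel_iterate hx₀U (by omega : i - 1 < M)).trans (by omega)⟩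

theorem nonperiodic_represents_pointed_loop {X : Type*} [TopologicalSpace X]
    [CompactSpace X] [TopologicalSpace.MetrizableSpace X] [TotallyDisconnectedSpace X] [Nonempty X]
    (hperf : Perfect (Set.univ : Set X))
    (f : X ≃ₜ X) (hnp : ∀ n : ℕ, 1 ≤ n → (⇑f)^[n] ≠ id) :
    ∀ M : ℕ, 1 ≤ M → ∃ α : X → ℕ,
      IsLocallyConstant α ∧
      (∀ x : X, 1 ≤ α x ∧ α x ≤ M) ∧
      (∀ i : ℕ, 1 ≤ i → i ≤ M → ∃ x : X, α x = i) ∧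
      (∀ i j : ℕ, (∃ x : X, α x = i ∧ α (f x) = j) ↔ pointedLoop M i j) :=
  nonperiodic_represents_pointed_loop_general f hnp
end
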